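/- Let (B, M, T) be a standard Young tableau of shape 3 × n with n ≥ 1 (so |B| = |M| = |T| = n, partitioning {1,…,3n}). Then 1 ∈ B; there is a unique a ∈ M with f₁(a) = 1; the set { t ∈ T : f₂(t) ≤ a } is nonempty, and letting x be its maximum, the triple B′ = { b − 1 : b ∈ (B \ {1}) ∪ {a} }, M′ = { m − 1 : m ∈ (M \ {a}) ∪ {x} }, T′ = { t − 1 : t ∈ T \ {x} } ∪ {3n} is again a standard Young tableau of shape 3 × n. (This triple is the jeu-de-taquin promotion of (B, M, T): after deleting 1, the entry a slides from the middle to the bottom row and x slides from the top to the middle row.) -/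

import Mathlib

open scoped Classical

/-- The `j`-th smallest element (0-indexed) of a finite set of naturals (default `0`). -/
noncomputable def nthSmallest (s : Finset ℕ) (j : ℕ) : ℕ := (s.sort (· ≤ ·)).getD j 0

/-- `(R, S)` satisfies the tableau condition: `|S| ≤ |R|` and for every `j ≤ |S|`, the `j`-th
smallest element of `S` is greater than the `j`-th smallest element of `R`. -/
def TableauCond (R S : Finset ℕ) : Prop :=
  S.card ≤ R.card ∧ ∀ j < S.card, nthSmallest R j < nthSmallest S j

/-- The greedy matching of `S` into `R`: processing the elements `i` of `S` in increasing
order, `greedy R S i = max { j ∈ R : j < i and j ≠ greedy R S i' for every i' ∈ S with i' < i }`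
(with value `0` when this set is empty or `i ∉ S`). -/
noncomputable def greedy (R S : Finset ℕ) (i : ℕ) : ℕ :=
  Nat.strongRecOn i fun i ih =>
    WithBot.unbotD 0 ((R.filter fun j => j < i ∧ ∀ i' (_ : i' ∈ S) (h : i' < i), j ≠ ih i' h).max)

/-- The arcs produced by the greedy matching of `S` into `R`, as ordered pairs
`(left endpoint, right endpoint)`. -/
noncomputable def arcsOf (R S : Finset ℕ) : Finset (ℕ × ℕ) :=
  S.image fun i => (greedy R S i, i)

/-- `(B, M, T)` (bottom, middle, top rows) encodes a three-row standard Young tableau with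
`N` boxes: the rows partition `{1,…,N}`, row lengths weakly decrease from bottom to top, and
consecutive rows satisfy the tableau condition. -/
def ThreeRowSYT (N : ℕ) (B M T : Finset ℕ) : Prop :=
  Disjoint B M ∧ Disjoint B T ∧ Disjoint M T ∧
  B ∪ M ∪ T = Finset.Icc 1 N ∧
  T.card ≤ M.card ∧ M.card ≤ B.card ∧
  TableauCond B M ∧ TableauCond M T

/-- Two arcs `(p,q)` and `(p',q')` (with `p<q`, `p'<q'`) cross if `p<p'<q<q'` or
`p'<p<q'<q`. -/
def Cross (a b : ℕ × ℕ) : Prop :=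
  (a.1 < b.1 ∧ b.1 < a.2 ∧ a.2 < b.2) ∨ (b.1 < a.1 ∧ a.1 < b.2 ∧ b.2 < a.2)

/-!
The tableau condition between a lower row `R` and an upper row `S` is a Hall condition: it holds
iff `|S| ≤ |R|` and some injection `S → R` sends every element to a smaller one, and then the
greedy matching is such an injection. Promotion is checked on these matchings, before all entries
are shifted down by one. Bottom and middle rows: the arc `a ↦ 1` is replaced by `x ↦ a`, which
points left because `a` is matched to some `t ≤ x`. Middle and top rows: after exchanging the
partners of `x` and of that `t`, the arc `x ↦ a` is replaced by `3n + 1 ↦ x`.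
-/

open Finset

section NthSmallest

variable {s : Finset ℕ} {j x : ℕ}

lemma nthSmallest_eq_orderEmbOfFin (hj : j < s.card) :
    nthSmallest s j = s.orderEmbOfFin rfl ⟨j, hj⟩ := by
  rw [orderEmbOfFin_apply, nthSmallest, List.getD_eq_getElem _ _ (by simpa using hj)]
  rfl

lemma nthSmallest_mem (hj : j < s.card) : nthSmallest s j ∈ s := by
  rw [nthSmallest_eq_orderEmbOfFin hj]
  exact orderEmbOfFin_mem s rfl _

lemma nthSmallest_lt_iff (hj : j < s.card) :
    nthSmallest s j < x ↔ j < #(s.filter (· < x)) := by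
  set e := s.orderEmbOfFin rfl
  set i : Fin s.card := ⟨j, hj⟩
  rw [nthSmallest_eq_orderEmbOfFin hj]
  constructor
  · intro hx
    have hsub : (Iic i).map e.toEmbedding ⊆ s.filter (· < x) := by
      intro y hy
      obtain ⟨k, hk, rfl⟩ := mem_map.1 hy
      exact mem_filter.2 ⟨orderEmbOfFin_mem s rfl k, (e.monotone (mem_Iic.1 hk)).trans_lt hx⟩
    simpa [i] using card_le_card hsub
  · intro hcard
    by_contra! hx
    have hsub : s.filter (· < x) ⊆ (Iio i).map e.toEmbedding := by
      intro y hy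
      obtain ⟨hys, hyx⟩ := mem_filter.1 hy
      obtain ⟨k, rfl⟩ : y ∈ Set.range e := by rw [range_orderEmbOfFin]; exact hys
      exact mem_map_of_mem _ (mem_Iio.2 (e.lt_iff_lt.1 (hyx.trans_le hx)))
    have := card_le_card hsub
    rw [card_map, Fin.card_Iio] at this
    exact absurd this (not_le.2 hcard)

end NthSmallest

lemma TableauCond.card_filter_lt {R S : Finset ℕ} (h : TableauCond R S) {s : ℕ} (hs : s ∈ S) :
    #(S.filter (· < s)) < #(R.filter (· < s)) := by
  set j := #(S.filter (· < s))
  have hj : j < S.card :=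
    card_lt_card (filter_ssubset.2 ⟨s, hs, lt_irrefl s⟩)
  have hjs : nthSmallest S j < s + 1 := by
    rw [nthSmallest_lt_iff hj]
    calc j < #(insert s (S.filter (· < s))) := by simp [card_insert_of_notMem, j]
      _ ≤ #(S.filter (· < s + 1)) := card_le_card fun y hy => by
        rcases mem_insert.1 hy with rfl | hy
        · exact mem_filter.2 ⟨hs, lt_add_one y⟩
        · exact mem_filter.2 ⟨(mem_filter.1 hy).1, (mem_filter.1 hy).2.trans (lt_add_one s)⟩
  exact (nthSmallest_lt_iff (hj.trans_le h.1)).1 ((h.2 j hj).trans_le (Nat.lt_succ_iff.1 hjs))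

structure IsMatchingBelow (φ : ℕ → ℕ) (R S : Finset ℕ) : Prop where
  mapsTo : ∀ s ∈ S, φ s ∈ R
  injOn : Set.InjOn φ S
  lt : ∀ s ∈ S, φ s < s

lemma TableauCond.of_isMatchingBelow {φ : ℕ → ℕ} {R S : Finset ℕ} (hcard : S.card ≤ R.card)
    (hφ : IsMatchingBelow φ R S) : TableauCond R S := by
  refine ⟨hcard, fun j hj => ?_⟩
  set s := nthSmallest S j
  have hS : j < #(S.filter (· < s + 1)) := (nthSmallest_lt_iff hj).1 (lt_add_one s)
  have hR : #(S.filter (· < s + 1)) ≤ #(R.filter (· < s)) := by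
    refine card_le_card_of_injOn φ (fun t ht => ?_) (hφ.injOn.mono (filter_subset _ S))
    obtain ⟨htS, hts⟩ := mem_filter.1 ht
    exact mem_filter.2 ⟨hφ.mapsTo t htS, (hφ.lt t htS).trans_le (Nat.lt_succ_iff.1 hts)⟩
  exact (nthSmallest_lt_iff (hj.trans_le hcard)).2 (hS.trans_le hR)

lemma greedy_eq (R S : Finset ℕ) (i : ℕ) :
    greedy R S i = WithBot.unbotD 0
      ((R.filter fun j => j < i ∧ ∀ i' ∈ S, i' < i → j ≠ greedy R S i').max) := by
  rw [greedy, Nat.strongRecOn_eq]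
  rfl

-- Below `s` there are more elements of `R` than of `S`, so the greedy step never runs out.
lemma TableauCond.greedy_mem_filter {R S : Finset ℕ} (h : TableauCond R S) {s : ℕ} (hs : s ∈ S) :
    greedy R S s ∈ R.filter fun j => j < s ∧ ∀ i' ∈ S, i' < s → j ≠ greedy R S i' := by
  set F := R.filter fun j => j < s ∧ ∀ i' ∈ S, i' < s → j ≠ greedy R S i'
  have hF : R.filter (· < s) \ (S.filter (· < s)).image (greedy R S) ⊆ F := by
    intro j hj
    simp only [mem_sdiff, mem_filter, mem_image, not_exists, not_and] at hj
    exact mem_filter.2 ⟨hj.1.1, hj.1.2, fun i' hi' hlt heq => hj.2 i' ⟨hi', hlt⟩ heq.symm⟩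
  have hne : F.Nonempty := by
    rw [← card_pos]
    have := h.card_filter_lt hs
    have := le_card_sdiff ((S.filter (· < s)).image (greedy R S)) (R.filter (· < s))
    have := card_image_le (s := S.filter (· < s)) (f := greedy R S)
    have := card_le_card hF
    omega
  rw [greedy_eq, ← coe_max' hne, WithBot.unbotD_coe]
  exact F.max'_mem hne

lemma TableauCond.isMatchingBelow_greedy {R S : Finset ℕ} (h : TableauCond R S) :
    IsMatchingBelow (greedy R S) R S where
  mapsTo _ hs := (mem_filter.1 (h.greedy_mem_filter hs)).1
  injOn s hs t ht heq := by
    by_contra hne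
    rcases lt_or_gt_of_ne hne with hlt | hlt
    · exact (mem_filter.1 (h.greedy_mem_filter ht)).2.2 s hs hlt heq.symm
    · exact (mem_filter.1 (h.greedy_mem_filter hs)).2.2 t ht hlt heq
  lt _ hs := (mem_filter.1 (h.greedy_mem_filter hs)).2.1

namespace IsMatchingBelow

variable {φ : ℕ → ℕ} {R S : Finset ℕ}

lemma image_eq (hφ : IsMatchingBelow φ R S) (hcard : R.card ≤ S.card) : S.image φ = R :=
  eq_of_subset_of_card_le (fun _ hr => by
    obtain ⟨s, hs, rfl⟩ := mem_image.1 hr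
    exact hφ.mapsTo s hs) (by rwa [card_image_of_injOn hφ.injOn])

lemma erase (hφ : IsMatchingBelow φ R S) {s : ℕ} (hs : s ∈ S) :
    IsMatchingBelow φ (R.erase (φ s)) (S.erase s) where
  mapsTo t ht := mem_erase.2 ⟨fun h => (mem_erase.1 ht).1 (hφ.injOn (mem_of_mem_erase ht) hs h),
    hφ.mapsTo t (mem_of_mem_erase ht)⟩
  injOn := hφ.injOn.mono (erase_subset s S)
  lt t ht := hφ.lt t (mem_of_mem_erase ht)

lemma insert (hφ : IsMatchingBelow φ R S) {r s : ℕ} (hr : r ∉ R) (hs : s ∉ S) (hrs : r < s) :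
    IsMatchingBelow (Function.update φ s r) (insert r R) (insert s S) where
  mapsTo t ht := by
    rcases mem_insert.1 ht with rfl | ht
    · simp
    · rw [Function.update_of_ne (ne_of_mem_of_not_mem ht hs)]
      exact mem_insert_of_mem (hφ.mapsTo t ht)
  injOn := by
    have hupd : Set.EqOn φ (Function.update φ s r) S := fun t ht =>
      (Function.update_of_ne (ne_of_mem_of_not_mem ht hs) _ _).symm
    rw [coe_insert, Set.injOn_insert (by exact_mod_cast hs)]
    refine ⟨hφ.injOn.congr hupd, ?_⟩
    rintro ⟨t, ht, heq⟩
    rw [← hupd ht, Function.update_self] at heq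
    exact hr (heq ▸ hφ.mapsTo t ht)
  lt t ht := by
    rcases mem_insert.1 ht with rfl | ht
    · simpa using hrs
    · rw [Function.update_of_ne (ne_of_mem_of_not_mem ht hs)]
      exact hφ.lt t ht

lemma swap (hφ : IsMatchingBelow φ R S) {s t : ℕ} (hs : s ∈ S) (ht : t ∈ S)
    (hst : φ s < t) (hts : φ t < s) :
    IsMatchingBelow (Equiv.swap (φ s) (φ t) ∘ φ) R S where
  mapsTo u hu := by
    simp only [Function.comp_apply, Equiv.swap_apply_def]
    split_ifs
    exacts [hφ.mapsTo t ht, hφ.mapsTo s hs, hφ.mapsTo u hu]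
  injOn := (Equiv.injective _).comp_injOn hφ.injOn
  lt u hu := by
    simp only [Function.comp_apply, Equiv.swap_apply_def]
    split_ifs with hus hut
    · rwa [hφ.injOn hu hs hus]
    · rwa [hφ.injOn hu ht hut]
    · exact hφ.lt u hu

end IsMatchingBelow

namespace Finset

lemma card_insert_erase {α : Type*} [DecidableEq α] {s : Finset α} {b c : α} (hb : b ∈ s)
    (hc : c ∉ s.erase b) : #(insert c (s.erase b)) = #s := by
  rw [card_insert_of_notMem hc, card_erase_add_one hb]

variable {s t : Finset ℕ}

lemma mem_image_sub_one (hs : 0 ∉ s) {y : ℕ} : y ∈ s.image (· - 1) ↔ y + 1 ∈ s := by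
  refine ⟨fun hy => ?_, fun hy => mem_image.2 ⟨y + 1, hy, rfl⟩⟩
  obtain ⟨x, hx, rfl⟩ := mem_image.1 hy
  rwa [Nat.sub_add_cancel (Nat.pos_of_ne_zero (ne_of_mem_of_not_mem hx hs))]

lemma card_image_sub_one (hs : 0 ∉ s) : #(s.image (· - 1)) = #s :=
  card_image_of_injOn fun x hx y hy hxy => by
    have := ne_of_mem_of_not_mem hx hs
    have := ne_of_mem_of_not_mem hy hs
    omega

lemma disjoint_image_sub_one (hs : 0 ∉ s) (ht : 0 ∉ t) (h : Disjoint s t) :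
    Disjoint (s.image (· - 1)) (t.image (· - 1)) := by
  rw [disjoint_left] at h ⊢
  intro y hys hyt
  exact h ((mem_image_sub_one hs).1 hys) ((mem_image_sub_one ht).1 hyt)

lemma image_sub_one_Icc (a b : ℕ) : (Icc (a + 1) (b + 1)).image (· - 1) = Icc a b := by
  ext y
  rw [mem_image_sub_one (by simp), mem_Icc, mem_Icc]
  omega

end Finset

lemma IsMatchingBelow.image_sub_one {φ : ℕ → ℕ} {R S : Finset ℕ} (hφ : IsMatchingBelow φ R S)
    (hR : 0 ∉ R) :
    IsMatchingBelow (fun y => φ (y + 1) - 1) (R.image (· - 1)) (S.image (· - 1)) := by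
  have hS : 0 ∉ S := fun h0 => Nat.not_lt_zero _ (hφ.lt 0 h0)
  have hpos : ∀ s ∈ S, 0 < φ s := fun s hs =>
    Nat.pos_of_ne_zero (ne_of_mem_of_not_mem (hφ.mapsTo s hs) hR)
  refine ⟨fun y hy => ?_, fun y hy z hz hyz => ?_, fun y hy => ?_⟩
  · rw [mem_image_sub_one hS] at hy
    rw [mem_image_sub_one hR, Nat.sub_add_cancel (hpos _ hy)]
    exact hφ.mapsTo _ hy
  · rw [mem_coe, mem_image_sub_one hS] at hy hz
    have := hpos _ hy
    have := hpos _ hz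
    have := hφ.injOn hy hz (by omega)
    omega
  · rw [mem_image_sub_one hS] at hy
    have := hφ.lt _ hy
    have := hpos _ hy
    show φ (y + 1) - 1 < y
    omega

lemma TableauCond.image_sub_one {R S : Finset ℕ} (h : TableauCond R S) (hR : 0 ∉ R) :
    TableauCond (R.image (· - 1)) (S.image (· - 1)) := by
  have hφ := h.isMatchingBelow_greedy
  have hS : 0 ∉ S := fun h0 => Nat.not_lt_zero _ (hφ.lt 0 h0)
  refine .of_isMatchingBelow ?_ (hφ.image_sub_one hR)
  rw [card_image_sub_one hR, card_image_sub_one hS]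
  exact h.1

lemma threeRowSYT_image_sub_one {N : ℕ} {B M T : Finset ℕ} (hBM : Disjoint B M)
    (hBT : Disjoint B T) (hMT : Disjoint M T) (hU : B ∪ M ∪ T = Icc 2 (N + 1))
    (hBM' : TableauCond B M) (hMT' : TableauCond M T) :
    ThreeRowSYT N (B.image (· - 1)) (M.image (· - 1)) (T.image (· - 1)) ∧
      #(B.image (· - 1)) = #B ∧ #(M.image (· - 1)) = #M ∧ #(T.image (· - 1)) = #T := by
  have h0 : 0 ∉ B ∪ M ∪ T := by simp [hU]
  simp only [mem_union, not_or] at h0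
  obtain ⟨⟨hB, hM⟩, hT⟩ := h0
  rw [card_image_sub_one hB, card_image_sub_one hM, card_image_sub_one hT]
  refine ⟨⟨disjoint_image_sub_one hB hM hBM, disjoint_image_sub_one hB hT hBT,
    disjoint_image_sub_one hM hT hMT, ?_, ?_, ?_, hBM'.image_sub_one hB,
    hMT'.image_sub_one hM⟩, rfl, rfl, rfl⟩
  · rw [← image_union, ← image_union, hU, image_sub_one_Icc]
  · rw [card_image_sub_one hT, card_image_sub_one hM]
    exact hMT'.1
  · rw [card_image_sub_one hM, card_image_sub_one hB]
    exact hBM'.1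

lemma TableauCond.insert_erase_of_isMatchingBelow {φ : ℕ → ℕ} {R S : Finset ℕ}
    (hφ : IsMatchingBelow φ R S) (hcard : S.card ≤ R.card) {s r s' : ℕ} (hs : s ∈ S)
    (hr : r ∉ R.erase (φ s)) (hs' : s' ∉ S.erase s) (hrs : r < s') :
    TableauCond (insert r (R.erase (φ s))) (insert s' (S.erase s)) := by
  refine .of_isMatchingBelow ?_ ((hφ.erase hs).insert hr hs' hrs)
  rwa [card_insert_erase hs hs', card_insert_erase (hφ.mapsTo s hs) hr]

section Promotion

variable {N : ℕ} {B M T : Finset ℕ} {a x : ℕ}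

lemma ThreeRowSYT.one_mem_bottom (h : ThreeRowSYT N B M T) (hN : 1 ≤ N) : 1 ∈ B := by
  obtain ⟨-, -, -, hU, -, -, hBM, hMT⟩ := h
  have h0 : 0 ∉ B ∪ M ∪ T := by simp [hU]
  have h1 : 1 ∈ B ∪ M ∪ T := by simp [hU, hN]
  simp only [mem_union, not_or] at h0 h1
  have below_one {R S : Finset ℕ} (hRS : TableauCond R S) (h1S : 1 ∈ S) : 0 ∈ R := by
    have := hRS.isMatchingBelow_greedy
    simpa [Nat.lt_one_iff.1 (this.lt 1 h1S)] using this.mapsTo 1 h1S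
  rcases h1 with (h1 | h1) | h1
  · exact h1
  · exact absurd (below_one hBM h1) h0.1.1
  · exact absurd (below_one hMT h1) h0.1.2

lemma ThreeRowSYT.promotion_partition (h : ThreeRowSYT N B M T) (h1 : 1 ∈ B) (ha : a ∈ M)
    (hx : x ∈ T) :
    Disjoint (insert a (B.erase 1)) (insert x (M.erase a)) ∧
      Disjoint (insert a (B.erase 1)) (insert (N + 1) (T.erase x)) ∧
      Disjoint (insert x (M.erase a)) (insert (N + 1) (T.erase x)) ∧
      insert a (B.erase 1) ∪ insert x (M.erase a) ∪ insert (N + 1) (T.erase x) =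
        Icc 2 (N + 1) := by
  obtain ⟨hBM, hBT, hMT, hU, -⟩ := h
  have hN : ∀ y ∈ B ∪ M ∪ T, y ≤ N := fun y hy => (mem_Icc.1 (hU ▸ hy)).2
  simp only [mem_union] at hN
  rw [disjoint_left] at hBM hBT hMT
  refine ⟨?_, ?_, ?_, ?_⟩
  · simp only [disjoint_left, mem_insert, mem_erase]
    grind
  · simp only [disjoint_left, mem_insert, mem_erase]
    grind
  · simp only [disjoint_left, mem_insert, mem_erase]
    grind
  · ext y
    have hy := congrArg (y ∈ ·) hU
    simp only [mem_union, mem_insert, mem_erase, mem_Icc, eq_iff_iff] at hy ⊢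
    grind

theorem ThreeRowSYT.promotion (h : ThreeRowSYT N B M T) (hcard : M.card ≤ T.card) (ha : a ∈ M)
    (ha1 : greedy B M a = 1) (hx : x ∈ T) (hxa : greedy M T x ≤ a)
    (hmax : ∀ t ∈ T, greedy M T t ≤ a → t ≤ x) :
    ThreeRowSYT N ((B.erase 1 ∪ {a}).image (· - 1)) ((M.erase a ∪ {x}).image (· - 1))
        (((T.erase x).image (· - 1)) ∪ {N}) ∧
      #((B.erase 1 ∪ {a}).image (· - 1)) = #B ∧ #((M.erase a ∪ {x}).image (· - 1)) = #M ∧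
      #(((T.erase x).image (· - 1)) ∪ {N}) = #T := by
  have ⟨_, _, _, _, _, _, tcBM, tcMT⟩ := h
  have hf := tcBM.isMatchingBelow_greedy
  have hg := tcMT.isMatchingBelow_greedy
  have h1 : 1 ∈ B := ha1 ▸ hf.mapsTo a ha
  obtain ⟨t, ht, hta⟩ := mem_image.1 ((hg.image_eq hcard).symm ▸ ha)
  have hat : a < t := hta ▸ hg.lt t ht
  have hax : a < x := hat.trans_le (hmax t ht hta.le)
  have hswap := hg.swap hx ht (hxa.trans_lt hat) (hta ▸ hax)
  rw [hta] at hswap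
  have hswap_x : (Equiv.swap (greedy M T x) a ∘ greedy M T) x = a := Equiv.swap_apply_left _ _
  obtain ⟨hd₁, hd₂, hd₃, hU'⟩ := h.promotion_partition h1 ha hx
  obtain ⟨hBM, -, hMT, hU, hcTM, hcMB, -⟩ := h
  have haB : a ∉ B.erase 1 := fun h' => disjoint_left.1 hBM (mem_of_mem_erase h') ha
  have hxM : x ∉ M.erase a := fun h' => disjoint_left.1 hMT (mem_of_mem_erase h') hx
  have hxN : x < N + 1 := Nat.lt_succ_of_le (mem_Icc.1 (hU ▸ mem_union_right _ hx)).2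
  have hNT : N + 1 ∉ T.erase x := fun h' =>
    Nat.not_succ_le_self N (mem_Icc.1 (hU ▸ mem_union_right _ (mem_of_mem_erase h'))).2
  have tc₁ := TableauCond.insert_erase_of_isMatchingBelow hf hcMB ha (ha1 ▸ haB) hxM hax
  have tc₂ := TableauCond.insert_erase_of_isMatchingBelow hswap hcTM hx
    (by rwa [hswap_x]) hNT hxN
  rw [ha1] at tc₁
  rw [hswap_x] at tc₂
  obtain ⟨hP, hcB, hcM, hcT⟩ := threeRowSYT_image_sub_one hd₁ hd₂ hd₃ hU' tc₁ tc₂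
  have hT' : (T.erase x).image (· - 1) ∪ {N} = (insert (N + 1) (T.erase x)).image (· - 1) := by
    rw [image_insert, union_singleton]
    rfl
  rw [union_singleton, union_singleton, hT']
  exact ⟨hP, hcB.trans (card_insert_erase h1 haB), hcM.trans (card_insert_erase ha hxM),
    hcT.trans (card_insert_erase hx hNT)⟩

end Promotion

/-- Jeu-de-taquin promotion of a standard Young tableau of shape `3 × n`: `1` lies on the
bottom row; there is a unique `a ∈ M` with `f₁(a) = 1`; the set `{t ∈ T : f₂(t) ≤ a}` is
nonempty; and, with `x` its maximum, the triple
`B' = {b − 1 : b ∈ (B \ {1}) ∪ {a}}`, `M' = {m − 1 : m ∈ (M \ {a}) ∪ {x}}`,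
`T' = {t − 1 : t ∈ T \ {x}} ∪ {3n}` is again a standard Young tableau of shape `3 × n`. -/
theorem promotion_is_SYT (n : ℕ) (hn : 1 ≤ n) (B M T : Finset ℕ)
    (h : ThreeRowSYT (3 * n) B M T)
    (hB : B.card = n) (hM : M.card = n) (hT : T.card = n) :
    1 ∈ B ∧
    (∃! a, a ∈ M ∧ greedy B M a = 1) ∧
    ∀ a ∈ M, greedy B M a = 1 →
      (T.filter fun t => greedy M T t ≤ a).Nonempty ∧
      ∀ x ∈ T, greedy M T x ≤ a → (∀ t ∈ T, greedy M T t ≤ a → t ≤ x) →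
        (ThreeRowSYT (3 * n)
            ((B.erase 1 ∪ {a}).image fun b => b - 1)
            ((M.erase a ∪ {x}).image fun m => m - 1)
            (((T.erase x).image fun t => t - 1) ∪ {3 * n}) ∧
          ((B.erase 1 ∪ {a}).image fun b => b - 1).card = n ∧
          ((M.erase a ∪ {x}).image fun m => m - 1).card = n ∧
          (((T.erase x).image fun t => t - 1) ∪ {3 * n}).card = n) := by
  have ⟨_, _, _, _, _, _, tcBM, tcMT⟩ := h
  have hf := tcBM.isMatchingBelow_greedy
  have hg := tcMT.isMatchingBelow_greedy
  have h1 : 1 ∈ B := h.one_mem_bottom (by omega)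
  refine ⟨h1, ?_, fun a ha ha1 => ⟨?_, fun x hx hxa hmax => ?_⟩⟩
  · obtain ⟨a, ha, ha1⟩ := mem_image.1 ((hf.image_eq (by omega)).symm ▸ h1)
    exact ⟨a, ⟨ha, ha1⟩, fun b hb => hf.injOn hb.1 ha (hb.2.trans ha1.symm)⟩
  · obtain ⟨t, ht, hta⟩ := mem_image.1 ((hg.image_eq (by omega)).symm ▸ ha)
    exact ⟨t, mem_filter.2 ⟨ht, hta.le⟩⟩
  · obtain ⟨hP, hcB, hcM, hcT⟩ := h.promotion (by omega) ha ha1 hx hxa hmax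
    exact ⟨hP, hcB.trans hB, hcM.trans hM, hcT.trans hT⟩
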